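/- Let p ∈ [1, ∞) with p ≠ 2, and define e ∈ M₂(ℂ) by e = (1/2)·[[1,1],[1,1]], acting on ℂ² with the ℓ^p norm. Then ‖e‖ = ‖1 − e‖ = 1 (operator norms), but e is not a hermitian idempotent, i.e., there exists λ ∈ ℝ with ‖exp(iλe)‖ > 1. -/

import Mathlib

open scoped ENNReal

/-! Both `e` and `1 - e` contract `ℓ^p_2` by convexity of `t ↦ t ^ p`, and each fixes a nonzero
vector. Since `e` is idempotent, `exp (iλe) = 1 + (exp (iλ) - 1) e`; at `λ = π/2` this is
`T = 1 + (i - 1) e`. Now `T` sends `(1, 0)` to `((1 + i)/2, (i - 1)/2)` and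
`((1 - i)/2, -(1 + i)/2)` to `(1, 0)`, and both of these vectors have norm `κ = 2 ^ (1/p - 1/2)`.
Hence `‖T‖ ≥ max κ κ⁻¹`, which exceeds `1` as soon as `p ≠ 2`. -/

open Complex
open scoped Nat

theorem IsIdempotentElem.exp_smul {𝕂 A : Type*} [RCLike 𝕂] [NormedRing A] [NormedAlgebra 𝕂 A]
    [CompleteSpace A] {e : A} (he : IsIdempotentElem e) (c : 𝕂) :
    NormedSpace.exp (c • e) = 1 + (NormedSpace.exp c - 1) • e := by
  have hterm : ∀ n : ℕ, (n !⁻¹ : 𝕂) • (c • e) ^ n =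
      ((n !⁻¹ : 𝕂) • c ^ n) • e + Pi.single (M := fun _ => A) 0 (1 - e) n := by
    rintro (_ | n)
    · simp
    · rw [smul_pow, he.pow_succ_eq, smul_smul, Pi.single_eq_of_ne n.succ_ne_zero, add_zero,
        smul_eq_mul]
  have hsum : HasSum (fun n => (n !⁻¹ : 𝕂) • (c • e) ^ n) (NormedSpace.exp c • e + (1 - e)) := by
    simpa only [hterm] using
      ((NormedSpace.exp_series_hasSum_exp' c).smul_const e).add (hasSum_pi_single 0 (1 - e))
  rw [(NormedSpace.exp_series_hasSum_exp' (c • e)).unique hsum, sub_smul, one_smul]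
  abel

section TwoDimensionalLp

variable {p : ℝ≥0∞} [Fact (1 ≤ p)] {E : Type*} [SeminormedAddCommGroup E]

theorem PiLp.norm_le_of_norm_apply_le_half_add (hp : p ≠ ⊤) {x y : PiLp p (fun _ : Fin 2 => E)}
    (h : ∀ i, ‖y i‖ ≤ (‖x 0‖ + ‖x 1‖) / 2) : ‖y‖ ≤ ‖x‖ := by
  have hr : 1 ≤ p.toReal := ENNReal.toReal_mono hp (Fact.out : 1 ≤ p)
  have hr0 : 0 < p.toReal := one_pos.trans_le hr
  rw [PiLp.norm_eq_sum hr0, PiLp.norm_eq_sum hr0, Fin.sum_univ_two, Fin.sum_univ_two]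
  gcongr ?_ ^ _
  have hmid : ((‖x 0‖ + ‖x 1‖) / 2) ^ p.toReal ≤ (‖x 0‖ ^ p.toReal + ‖x 1‖ ^ p.toReal) / 2 :=
    calc ((‖x 0‖ + ‖x 1‖) / 2) ^ p.toReal = (1 / 2 * ‖x 0‖ + 1 / 2 * ‖x 1‖) ^ p.toReal := by
          ring_nf
      _ ≤ 1 / 2 * ‖x 0‖ ^ p.toReal + 1 / 2 * ‖x 1‖ ^ p.toReal := by
          simpa only [smul_eq_mul] using (convexOn_rpow hr).2 (norm_nonneg (x 0))
            (norm_nonneg (x 1)) (by norm_num) (by norm_num) (add_halves 1)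
      _ = (‖x 0‖ ^ p.toReal + ‖x 1‖ ^ p.toReal) / 2 := by ring
  have hy : ∀ i, ‖y i‖ ^ p.toReal ≤ ((‖x 0‖ + ‖x 1‖) / 2) ^ p.toReal := fun i =>
    Real.rpow_le_rpow (norm_nonneg _) (h i) hr0.le
  linarith [hy 0, hy 1]

theorem PiLp.norm_eq_of_norm_apply_eq (hp : p ≠ ⊤) {x : PiLp p (fun _ : Fin 2 => E)}
    (h : ‖x 0‖ = ‖x 1‖) : ‖x‖ = 2 ^ p.toReal⁻¹ * ‖x 0‖ := by
  have hr0 : 0 < p.toReal := ENNReal.toReal_pos (one_pos.trans_le Fact.out).ne' hp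
  rw [PiLp.norm_eq_sum hr0, Fin.sum_univ_two, ← h, ← two_mul, one_div,
    Real.mul_rpow zero_le_two (by positivity), Real.rpow_rpow_inv (norm_nonneg _) hr0.ne']

theorem PiLp.opNorm_eq_one_of_apply_le_half_add {𝕜 : Type*} [NontriviallyNormedField 𝕜]
    [NormedSpace 𝕜 E] (hp : p ≠ ⊤)
    (f : PiLp p (fun _ : Fin 2 => E) →L[𝕜] PiLp p (fun _ : Fin 2 => E))
    (hf : ∀ x i, ‖f x i‖ ≤ (‖x 0‖ + ‖x 1‖) / 2) {v : PiLp p (fun _ : Fin 2 => E)}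
    (hv : ‖v‖ ≠ 0) (hfv : f v = v) : ‖f‖ = 1 := by
  refine le_antisymm (f.opNorm_le_bound zero_le_one fun x => ?_) ?_
  · rw [one_mul]
    exact PiLp.norm_le_of_norm_apply_le_half_add hp (hf x)
  · simpa [hfv, div_self hv] using f.ratio_le_opNorm v

end TwoDimensionalLp

theorem one_lt_max_self_inv {α : Type*} [Field α] [LinearOrder α] [IsStrictOrderedRing α] {a : α}
    (ha : 0 < a) (ha1 : a ≠ 1) : 1 < max a a⁻¹ := by
  rcases ha1.lt_or_gt with h | h
  · exact lt_max_of_lt_right (one_lt_inv₀ ha |>.2 h)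
  · exact lt_max_of_lt_left h

theorem Complex.norm_one_add_I_div_two : ‖(1 + I) / 2‖ = 2 ^ (-(2⁻¹ : ℝ)) := by
  have h : ‖1 + I‖ = √2 := by
    simpa [one_add_one_eq_two] using norm_add_mul_I 1 1
  rw [norm_div, h, Complex.norm_two, Real.sqrt_eq_rpow,
    show (-(2⁻¹) : ℝ) = 1 / 2 - 1 by norm_num, Real.rpow_sub two_pos, Real.rpow_one]

section Averaging

variable {p : ℝ≥0∞} [Fact (1 ≤ p)]
  {e : PiLp p (fun _ : Fin 2 => ℂ) →L[ℂ] PiLp p (fun _ : Fin 2 => ℂ)}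

theorem opNorm_averaging_eq_one (hp : p ≠ ⊤) (he : ∀ x i, e x i = (x 0 + x 1) / 2) :
    ‖e‖ = 1 := by
  refine PiLp.opNorm_eq_one_of_apply_le_half_add hp e (fun x i => ?_)
    (v := WithLp.toLp p ![1, 1]) ?_ ?_
  · rw [he, norm_div, Complex.norm_two]
    gcongr
    exact norm_add_le _ _
  · rw [PiLp.norm_eq_of_norm_apply_eq hp (by simp)]
    simpa using (by positivity : (2 : ℝ) ^ p.toReal⁻¹ ≠ 0)
  · ext i
    fin_cases i <;> simp [he]

theorem opNorm_one_sub_averaging_eq_one (hp : p ≠ ⊤) (he : ∀ x i, e x i = (x 0 + x 1) / 2) :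
    ‖1 - e‖ = 1 := by
  have hfe : ∀ x i, (1 - e) x i = x i - (x 0 + x 1) / 2 := fun x i => by simp [he]
  have hle : ∀ x : PiLp p (fun _ : Fin 2 => ℂ), ‖(x 0 - x 1) / 2‖ ≤ (‖x 0‖ + ‖x 1‖) / 2 :=
    fun x => by rw [norm_div, Complex.norm_two]; gcongr; exact norm_sub_le _ _
  refine PiLp.opNorm_eq_one_of_apply_le_half_add hp (1 - e)
    (fun x => Fin.forall_fin_two.2 ⟨?_, ?_⟩) (v := WithLp.toLp p ![1, -1]) ?_ ?_
  · rw [hfe, show x 0 - (x 0 + x 1) / 2 = (x 0 - x 1) / 2 by ring]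
    exact hle x
  · rw [hfe, ← norm_neg, show -(x 1 - (x 0 + x 1) / 2) = (x 0 - x 1) / 2 by ring]
    exact hle x
  · rw [PiLp.norm_eq_of_norm_apply_eq hp (by simp)]
    simpa using (by positivity : (2 : ℝ) ^ p.toReal⁻¹ ≠ 0)
  · ext i
    fin_cases i <;> simp [he]

theorem exp_pi_div_two_mul_I_smul_averaging_apply (he : ∀ x i, e x i = (x 0 + x 1) / 2)
    (x : PiLp p (fun _ : Fin 2 => ℂ)) (i : Fin 2) :
    NormedSpace.exp ((((Real.pi / 2 : ℝ) : ℂ) * I) • e) x i =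
      x i + (I - 1) * ((x 0 + x 1) / 2) := by
  have hidem : IsIdempotentElem e :=
    ContinuousLinearMap.ext fun x => PiLp.ext fun i => by simp [he]
  have hexp : NormedSpace.exp (((Real.pi / 2 : ℝ) : ℂ) * I) = I := by
    rw [← Complex.exp_eq_exp_ℂ]
    push_cast
    exact exp_pi_div_two_mul_I
  rw [hidem.exp_smul, hexp]
  simp [he]

theorem one_lt_opNorm_exp_pi_div_two_mul_I_smul_averaging (hp : p ≠ ⊤) (hp2 : p ≠ 2)
    (he : ∀ x i, e x i = (x 0 + x 1) / 2) :
    1 < ‖NormedSpace.exp ((((Real.pi / 2 : ℝ) : ℂ) * I) • e)‖ := by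
  set T := NormedSpace.exp ((((Real.pi / 2 : ℝ) : ℂ) * I) • e)
  have hT : ∀ x i, T x i = x i + (I - 1) * ((x 0 + x 1) / 2) :=
    exp_pi_div_two_mul_I_smul_averaging_apply he
  set κ : ℝ := 2 ^ (p.toReal⁻¹ - 2⁻¹)
  have hκ0 : 0 < κ := by positivity
  have hκ1 : κ ≠ 1 := by
    rw [Ne, ← Real.rpow_zero 2, Real.rpow_right_inj two_pos (by norm_num), sub_eq_zero, inv_inj]
    intro h
    apply hp2
    rw [← ENNReal.ofReal_toReal hp, h, ENNReal.ofReal_ofNat]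
  have hnorm : ∀ y : PiLp p (fun _ : Fin 2 => ℂ),
      ‖y 0‖ = ‖(1 + I) / 2‖ → ‖y 1‖ = ‖(1 + I) / 2‖ → ‖y‖ = κ := fun y h0 h1 => by
    rw [PiLp.norm_eq_of_norm_apply_eq hp (h0.trans h1.symm), h0, norm_one_add_I_div_two,
      ← Real.rpow_add two_pos, ← sub_eq_add_neg]
  set u := PiLp.single (β := fun _ : Fin 2 => ℂ) p 0 1
  set v : PiLp p (fun _ : Fin 2 => ℂ) := WithLp.toLp p ![(1 + I) / 2, (I - 1) / 2]
  set w : PiLp p (fun _ : Fin 2 => ℂ) := WithLp.toLp p ![(1 - I) / 2, -((1 + I) / 2)]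
  have hTu : T u = v := by
    ext i
    fin_cases i <;> simp [hT, u, v] <;> ring
  have hTw : T w = u := by
    ext i
    fin_cases i <;> simp [hT, u, w] <;> linear_combination (-1/2 : ℂ) * I_sq
  have hv : ‖v‖ = κ := hnorm v rfl <| by
    change ‖(I - 1) / 2‖ = _
    rw [show (I - 1) / 2 = I * ((1 + I) / 2) by linear_combination (-1/2 : ℂ) * I_sq, norm_mul,
      norm_I, one_mul]
  have hw : ‖w‖ = κ := hnorm w (by
    change ‖(1 - I) / 2‖ = _
    rw [show (1 - I) / 2 = -I * ((1 + I) / 2) by linear_combination (1/2 : ℂ) * I_sq, norm_mul,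
      norm_neg, norm_I, one_mul]) (norm_neg _)
  calc 1 < max κ κ⁻¹ := one_lt_max_self_inv hκ0 hκ1
    _ ≤ ‖T‖ := max_le (by simpa [hTu, hv, u] using T.ratio_le_opNorm u)
        (by simpa [hTw, hw, u] using T.ratio_le_opNorm w)

end Averaging

/-- For `p ∈ [1, ∞)`, `p ≠ 2`, the idempotent
`e = (1/2)[[1,1],[1,1]]` acting on `ℓ^p_2` satisfies `‖e‖ = ‖1 - e‖ = 1`, but `e` is not
hermitian: `‖exp(iλe)‖ > 1` for some real `λ`. -/
theorem stmt_11 (p : ℝ≥0∞) [Fact (1 ≤ p)] (hp : p ≠ ⊤) (hp2 : p ≠ 2)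
    (e : PiLp p (fun _ : Fin 2 => ℂ) →L[ℂ] PiLp p (fun _ : Fin 2 => ℂ))
    (he : ∀ (x : PiLp p (fun _ : Fin 2 => ℂ)) (i : Fin 2), e x i = (x 0 + x 1) / 2) :
    ‖e‖ = 1 ∧ ‖(1 : PiLp p (fun _ : Fin 2 => ℂ) →L[ℂ] PiLp p (fun _ : Fin 2 => ℂ)) - e‖ = 1 ∧
      ∃ l : ℝ, 1 < ‖NormedSpace.exp (((l : ℂ) * Complex.I) • e)‖ :=
  ⟨opNorm_averaging_eq_one hp he, opNorm_one_sub_averaging_eq_one hp he, Real.pi / 2,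
    one_lt_opNorm_exp_pi_div_two_mul_I_smul_averaging hp hp2 he⟩
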